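/- Let p be a prime, let q₁, q₂ be nonzero elements of ℤ/pℤ with q₁ ≠ q₂, and let h ∈ ℤ/pℤ. Then the map S : (ℤ/pℤ)² → (ℤ/pℤ)² given by S(x,y) = (q₁⁻¹·y + h, q₂·x + (1 − q₂·q₁⁻¹)·y − q₂·h) makes (ℤ/pℤ, S) an indecomposable nondegenerate braided set. -/

import Mathlib

/-!
Write `S (x, y) = (σ y, τ_y x)`. The maps `σ` and `τ_y` are affine bijections, which gives
nondegeneracy and bijectivity, and the braid relation is a polynomial identity. For
indecomposability note that `τ_w x = τ_y x + (1 - q₂ q₁⁻¹) (w - y)` with `1 - q₂ q₁⁻¹ ≠ 0`.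
If a block `X₁` of a decomposition contained `y ≠ w`, then `τ_y` and `τ_w` would both permute the
finite set `X₁`, so `X₁` would be closed under a nonzero translation and hence all of `ℤ/pℤ`.
So both blocks are singletons, and `ℤ/pℤ` would have two elements, while `0`, `q₁`, `q₂` are three.
-/

/-- `S₁ = S × id` acting on the first two factors of `X × X × X`. -/
def braidL {X : Type*} (S : X × X → X × X) : X × X × X → X × X × X :=
  fun t => ((S (t.1, t.2.1)).1, (S (t.1, t.2.1)).2, t.2.2)

/-- `S₂ = id × S` acting on the last two factors of `X × X × X`. -/
def braidR {X : Type*} (S : X × X → X × X) : X × X × X → X × X × X :=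
  fun t => (t.1, S (t.2.1, t.2.2))

/-- A braided set: `S` is a bijection satisfying `S₁S₂S₁ = S₂S₁S₂`. -/
def IsBraidedSet {X : Type*} (S : X × X → X × X) : Prop :=
  Function.Bijective S ∧
    braidL S ∘ braidR S ∘ braidL S = braidR S ∘ braidL S ∘ braidR S

/-- Nondegeneracy: writing `S (x, y) = (g_x y, f_y x)`, each `g_x` and each `f_y`
is a bijection. -/
def Nondegenerate {X : Type*} (S : X × X → X × X) : Prop :=
  (∀ x, Function.Bijective fun y => (S (x, y)).1) ∧
    (∀ y, Function.Bijective fun x => (S (x, y)).2)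

/-- Decomposability of a solution. -/
def Decomposable {X : Type*} (S : X × X → X × X) : Prop :=
  ∃ X₁ X₂ : Set X, X₁.Nonempty ∧ X₂.Nonempty ∧ Disjoint X₁ X₂ ∧ X₁ ∪ X₂ = Set.univ ∧
    (∀ x ∈ X₁, ∀ y ∈ X₁, (S (x, y)).1 ∈ X₁ ∧ (S (x, y)).2 ∈ X₁) ∧
    (∀ x ∈ X₂, ∀ y ∈ X₂, (S (x, y)).1 ∈ X₂ ∧ (S (x, y)).2 ∈ X₂)

/-- Indecomposability of a solution. -/
def Indecomposable {X : Type*} (S : X × X → X × X) : Prop := ¬ Decomposable S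

open Function Set

section Field

variable {K : Type*} [Field K]

def affineSolution (q₁ q₂ h : K) (xy : K × K) : K × K :=
  (q₁⁻¹ * xy.2 + h, q₂ * xy.1 + (1 - q₂ * q₁⁻¹) * xy.2 - q₂ * h)

lemma bijective_mul_add {a : K} (ha : a ≠ 0) (c : K) : Bijective fun x => a * x + c :=
  (Equiv.addRight c).bijective.comp (Equiv.mulLeft₀ a ha).bijective

lemma nondegenerate_affineSolution {q₁ q₂ : K} (h : K) (hq₁ : q₁ ≠ 0) (hq₂ : q₂ ≠ 0) :
    Nondegenerate (affineSolution q₁ q₂ h) := by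
  refine ⟨fun _ => bijective_mul_add (inv_ne_zero hq₁) h, fun y => ?_⟩
  convert bijective_mul_add hq₂ ((1 - q₂ * q₁⁻¹) * y - q₂ * h) using 2
  simp only [affineSolution]
  ring

lemma Nondegenerate.bijective {X : Type*} {S : X × X → X × X} (hS : Nondegenerate S)
    {g : X → X} (hg : ∀ x y, (S (x, y)).1 = g y) : Bijective S := by
  refine ⟨fun ⟨x, y⟩ ⟨x', y'⟩ hxy => ?_, fun ⟨u, v⟩ => ?_⟩
  · have hy : y = y' := (hS.1 x).1 (by simpa only [hg] using congrArg Prod.fst hxy)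
    subst hy
    exact Prod.ext ((hS.2 y).1 (congrArg Prod.snd hxy)) rfl
  · obtain ⟨y, hy⟩ := (hS.1 u).2 u
    obtain ⟨x, hx⟩ := (hS.2 y).2 v
    refine ⟨(x, y), Prod.ext ?_ hx⟩
    simp only [hg] at hy ⊢
    exact hy

lemma affineSolution_braid (q₁ q₂ h : K) :
    braidL (affineSolution q₁ q₂ h) ∘ braidR (affineSolution q₁ q₂ h) ∘
        braidL (affineSolution q₁ q₂ h) =
      braidR (affineSolution q₁ q₂ h) ∘ braidL (affineSolution q₁ q₂ h) ∘
        braidR (affineSolution q₁ q₂ h) := by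
  funext ⟨x, y, z⟩
  simp only [braidL, braidR, affineSolution, comp_apply, Prod.mk.injEq]
  refine ⟨trivial, ?_, ?_⟩ <;> field_simp <;> ring

end Field

lemma Set.Finite.add_mem_of_mapsTo {α : Type*} [Add α] {X : Set α} (hX : X.Finite)
    {T : α → α} (c : α) (hT : Injective T) (hTX : MapsTo T X X)
    (hcX : MapsTo (fun x => T x + c) X X) : ∀ z ∈ X, z + c ∈ X := by
  intro z hz
  obtain ⟨t, ht, rfl⟩ := ((hX.injOn_iff_bijOn_of_mapsTo hTX).mp hT.injOn).surjOn hz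
  exact hcX ht

lemma ZMod.eq_univ_of_add_mem {p : ℕ} [Fact p.Prime] {X : Set (ZMod p)} {d : ZMod p}
    (hd : d ≠ 0) (hX : ∀ z ∈ X, z + d ∈ X) (hne : X.Nonempty) : X = univ := by
  obtain ⟨x₀, hx₀⟩ := hne
  have hmul : ∀ n : ℕ, x₀ + n * d ∈ X := by
    intro n
    induction n with
    | zero => simpa using hx₀
    | succ n ih => simpa [add_mul, add_assoc] using hX _ ih
  refine eq_univ_of_forall fun z => ?_
  simpa [ZMod.natCast_zmod_val, hd] using hmul ((z - x₀) / d).val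

lemma ZMod.subsingleton_of_affine_mem {p : ℕ} [Fact p.Prime] {a b : ZMod p} (c : ZMod p)
    (ha : a ≠ 0) (hb : b ≠ 0) {X : Set (ZMod p)} (hX : ∀ y ∈ X, ∀ x ∈ X, a * x + b * y - c ∈ X)
    (hne : X ≠ univ) : X.Subsingleton := by
  intro y hy w hw
  by_contra hyw
  refine hne (ZMod.eq_univ_of_add_mem (d := b * (w - y)) ?_ ?_ ⟨y, hy⟩)
  · exact mul_ne_zero hb (sub_ne_zero.mpr (Ne.symm hyw))
  refine (toFinite X).add_mem_of_mapsTo _ (T := fun x => a * x + b * y - c) ?_ (hX y hy) ?_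
  · intro x x' hxx'
    exact mul_left_cancel₀ ha (by simpa using hxx')
  · intro x hx
    convert hX w hw x hx using 1
    ring

lemma ZMod.indecomposable_affineSolution {p : ℕ} [Fact p.Prime] {q₁ q₂ : ZMod p} (h : ZMod p)
    (hq₁ : q₁ ≠ 0) (hq₂ : q₂ ≠ 0) (hne : q₁ ≠ q₂) : Indecomposable (affineSolution q₁ q₂ h) := by
  rintro ⟨X₁, X₂, ⟨y₁, hy₁⟩, ⟨y₂, hy₂⟩, hdisj, hcover, hS₁, hS₂⟩
  have hb : 1 - q₂ * q₁⁻¹ ≠ 0 := by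
    rw [sub_ne_zero, ne_eq, eq_comm, mul_inv_eq_one₀ hq₁]
    exact hne.symm
  have hX₁ : X₁.Subsingleton := ZMod.subsingleton_of_affine_mem _ hq₂ hb
    (fun y hy x hx => (hS₁ x hx y hy).2) fun hX => hdisj.notMem_of_mem_right hy₂ (hX ▸ mem_univ _)
  have hX₂ : X₂.Subsingleton := ZMod.subsingleton_of_affine_mem _ hq₂ hb
    (fun y hy x hx => (hS₂ x hx y hy).2) fun hX => hdisj.notMem_of_mem_left hy₁ (hX ▸ mem_univ _)
  have hpair : ∀ z, z = y₁ ∨ z = y₂ := fun z =>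
    (hcover.symm ▸ mem_univ z : z ∈ X₁ ∪ X₂).imp (hX₁ · hy₁) (hX₂ · hy₂)
  rcases hpair 0 with h0 | h0 <;> rcases hpair q₁ with h1 | h1 <;> rcases hpair q₂ with h2 | h2 <;>
    simp_all

/-- Theorem 2.9(1)(ii): the affine map
`S(x,y) = (q₁⁻¹ y + h, q₂ x + (1 - q₂ q₁⁻¹) y - q₂ h)` is an indecomposable
nondegenerate braided set on `ℤ/pℤ`. -/
theorem affine_solution_type_ii
    {p : ℕ} (hp : p.Prime) (q₁ q₂ h : ZMod p) (hq₁ : q₁ ≠ 0) (hq₂ : q₂ ≠ 0)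
    (hne : q₁ ≠ q₂) :
    IsBraidedSet (fun xy : ZMod p × ZMod p =>
        (q₁⁻¹ * xy.2 + h, q₂ * xy.1 + (1 - q₂ * q₁⁻¹) * xy.2 - q₂ * h)) ∧
    Nondegenerate (fun xy : ZMod p × ZMod p =>
        (q₁⁻¹ * xy.2 + h, q₂ * xy.1 + (1 - q₂ * q₁⁻¹) * xy.2 - q₂ * h)) ∧
    Indecomposable (fun xy : ZMod p × ZMod p =>
        (q₁⁻¹ * xy.2 + h, q₂ * xy.1 + (1 - q₂ * q₁⁻¹) * xy.2 - q₂ * h)) := by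
  have := Fact.mk hp
  have hnd := nondegenerate_affineSolution h hq₁ hq₂
  refine ⟨⟨?_, affineSolution_braid q₁ q₂ h⟩, hnd, ZMod.indecomposable_affineSolution h hq₁ hq₂ hne⟩
  exact hnd.bijective (g := fun y => q₁⁻¹ * y + h) fun _ _ => rfl
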